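/- arXiv:1401.2681 — 2 statements merged into one kernel-verified Lean document; each statement's English description precedes it below -/
import Mathlib

section
/- Let M be a 2-level poset whose comparability graph is connected, locally 1-arc-transitive and locally 2-arc-transitive. Every automorphism of M extends canonically to an automorphism of M^D (acting on cuts by taking images); under this action, Aut(M) acts transitively on the set ↓Ram(M) of downward ramification points of M and transitively on the set ↑Ram(M) of upward ramification points of M. -/
set_option autoImplicit false

section Preamble

/-- A *cut* of a poset `M`: a nonempty subset, bounded above, which equals the set of
lower bounds of its set of upper bounds. -/
def IsCut {M : Type*} [PartialOrder M] (J : Set M) : Prop :=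
  J.Nonempty ∧ (upperBounds J).Nonempty ∧ lowerBounds (upperBounds J) = J

/-- The Dedekind–MacNeille completion of `M`: the set of cuts, ordered by inclusion. -/
abbrev DMC (M : Type*) [PartialOrder M] : Type _ := {J : Set M // IsCut J}

/-- The canonical embedding of `M` into `DMC M`, `a ↦ {x | x ≤ a}`. -/
def principalCut {M : Type*} [PartialOrder M] (a : M) : DMC M :=
  ⟨Set.Iic a, ⟨a, le_refl a⟩, ⟨a, fun _ hx => hx⟩, by
    apply Set.Subset.antisymm
    · intro x hx
      exact hx (fun _ hy => hy)
    · exact subset_lowerBounds_upperBounds _⟩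

/-- The image of `M` in its Dedekind–MacNeille completion (the principal cuts). -/
def principalSet (M : Type*) [PartialOrder M] : Set (DMC M) :=
  Set.range (fun a : M => principalCut a)

/-- A 2-level poset: every element is minimal or maximal. -/
def IsTwoLevel (M : Type*) [PartialOrder M] : Prop :=
  ∀ x : M, IsMin x ∨ IsMax x

/-- The set `Min(M)` of minimal elements. -/
def minSet (M : Type*) [PartialOrder M] : Set M := {x | IsMin x}

/-- The set `Max(M)` of maximal elements. -/
def maxSet (M : Type*) [PartialOrder M] : Set M := {x | IsMax x}

/-- The comparability graph of a poset: `x` adjacent to `y` iff `x < y` or `y < x`. -/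
def compGraph (M : Type*) [PartialOrder M] : SimpleGraph M where
  Adj x y := x < y ∨ y < x
  symm := ⟨fun _ _ h => Or.symm h⟩
  loopless := ⟨fun x h => by rcases h with h | h <;> exact lt_irrefl x h⟩

/-- Upward ramification points of `M`: infima in `DMC M` of two incomparable elements of `M`. -/
def upRam (M : Type*) [PartialOrder M] : Set (DMC M) :=
  {p | ∃ a b : M, ¬ a ≤ b ∧ ¬ b ≤ a ∧ IsGLB {principalCut a, principalCut b} p}

/-- Downward ramification points of `M`: suprema in `DMC M` of two incomparable elements of `M`. -/
def downRam (M : Type*) [PartialOrder M] : Set (DMC M) :=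
  {p | ∃ a b : M, ¬ a ≤ b ∧ ¬ b ≤ a ∧ IsLUB {principalCut a, principalCut b} p}

/-- `M⁺ = M ∪ Ram(M)`, as a subset of `DMC M`. -/
def MPlus (M : Type*) [PartialOrder M] : Set (DMC M) :=
  principalSet M ∪ upRam M ∪ downRam M

/-- A 2-arc in a graph. -/
def IsTwoArc {V : Type*} (G : SimpleGraph V) (v₀ v₁ v₂ : V) : Prop :=
  G.Adj v₀ v₁ ∧ G.Adj v₁ v₂ ∧ v₀ ≠ v₂

/-- Local 1-arc-transitivity: every vertex stabilizer is transitive on neighbours. -/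
def LocallyOneArcTransitive {V : Type*} (G : SimpleGraph V) : Prop :=
  ∀ v u w : V, G.Adj v u → G.Adj v w → ∃ g : G ≃g G, g v = v ∧ g u = w

/-- Local 2-arc-transitivity: every vertex stabilizer is transitive on 2-arcs from that vertex. -/
def LocallyTwoArcTransitive {V : Type*} (G : SimpleGraph V) : Prop :=
  ∀ v u₁ w₁ u₂ w₂ : V, IsTwoArc G v u₁ w₁ → IsTwoArc G v u₂ w₂ →
    ∃ g : G ≃g G, g v = v ∧ g u₁ = u₂ ∧ g w₁ = w₂

/-- (Global) 1-arc-transitivity of a graph. -/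
def OneArcTransitive {V : Type*} (G : SimpleGraph V) : Prop :=
  ∀ v₀ v₁ u₀ u₁ : V, G.Adj v₀ v₁ → G.Adj u₀ u₁ →
    ∃ g : G ≃g G, g v₀ = u₀ ∧ g v₁ = u₁

/-- (Global) 2-arc-transitivity of a graph. -/
def TwoArcTransitive {V : Type*} (G : SimpleGraph V) : Prop :=
  ∀ v₀ v₁ v₂ u₀ u₁ u₂ : V, IsTwoArc G v₀ v₁ v₂ → IsTwoArc G u₀ u₁ u₂ →
    ∃ g : G ≃g G, g v₀ = u₀ ∧ g v₁ = u₁ ∧ g v₂ = u₂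

/-- 3-CS-homogeneity: every isomorphism between connected 3-element induced subposets
extends to an automorphism. -/
def ThreeCSHomogeneous (M : Type*) [PartialOrder M] : Prop :=
  ∀ A B : Set M, A.ncard = 3 → B.ncard = 3 →
    ((compGraph M).induce A).Connected → ((compGraph M).induce B).Connected →
    ∀ f : ↥A ≃o ↥B, ∃ g : M ≃o M, ∀ a : ↥A, g ↑a = ↑(f a)

/-- 2-CS-transitivity: the automorphism group is transitive on comparable pairs. -/
def TwoCSTransitive (M : Type*) [PartialOrder M] : Prop :=
  ∀ a b a' b' : M, a < b → a' < b' → ∃ g : M ≃o M, g a = a' ∧ g b = b'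

/-- 3-CS-transitivity: for any two isomorphic connected 3-element induced subposets there
is an automorphism carrying one onto the other. -/
def ThreeCSTransitive (M : Type*) [PartialOrder M] : Prop :=
  ∀ A B : Set M, A.ncard = 3 → B.ncard = 3 →
    ((compGraph M).induce A).Connected → ((compGraph M).induce B).Connected →
    Nonempty (↥A ≃o ↥B) → ∃ g : M ≃o M, ⇑g '' A = B

/-- A subset of a poset is a `k`-diamond if it consists of a least element, a greatest
element, and exactly `k` pairwise incomparable elements strictly in between. -/
def IsKDiamond {P : Type*} [PartialOrder P] (s : Set P) (k : ℕ) : Prop :=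
  ∃ a b : P, a ∈ s ∧ b ∈ s ∧ a ≠ b ∧ (∀ z ∈ s, a ≤ z ∧ z ≤ b) ∧
    (s \ {a, b}).ncard = k ∧
    ∀ z ∈ s \ ({a, b} : Set P), ∀ w ∈ s \ ({a, b} : Set P), z ≠ w → ¬ z ≤ w

end Preamble

/-!
The order automorphisms of a 2-level poset `M` are exactly the automorphisms of its
comparability graph that map some (hence, by connectedness, every) minimal element to a
minimal element. Local arc-transitivity at the middle vertex of a path `v — x — w` moves `v`
to `w`, so graph automorphisms act transitively on each side of the bipartition, and local
2-arc-transitivity then moves any 2-arc `a — u — b` to any 2-arc `a' — u' — b'` with `a`, `a'`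
on the same side. A downward ramification point `a ∨ b` is the cut `(({a, b})ᵘ)ˡ`, with `a`, `b`
minimal and joined by a 2-arc through a common upper bound; an upward one `a ∧ b` is the cut
`{a, b}ˡ`, with `a`, `b` maximal and joined through a common lower bound. In both cases it is
determined by the pair `(a, b)`, which can be moved to any other such pair.
-/

open SimpleGraph

section Cuts

variable {M N : Type*} [PartialOrder M] [PartialOrder N]

theorem IsCut.image (g : M ≃o N) {J : Set M} (hJ : IsCut J) : IsCut (g '' J) := by
  obtain ⟨hne, ⟨u, hu⟩, hcl⟩ := hJ
  refine ⟨hne.image g, ⟨g u, ?_⟩, ?_⟩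
  · rw [g.upperBounds_image]
    exact Set.mem_image_of_mem g hu
  · rw [g.upperBounds_image, g.lowerBounds_image, hcl]

def DMC.map (g : M ≃o N) : DMC M ≃o DMC N where
  toFun J := ⟨g '' J.val, J.2.image g⟩
  invFun J := ⟨g.symm '' J.val, J.2.image g.symm⟩
  left_inv J := Subtype.ext (g.symm_image_image J.val)
  right_inv J := Subtype.ext (g.image_symm_image J.val)
  map_rel_iff' := Set.image_subset_image_iff g.injective

theorem OrderIso.image_lowerBounds_upperBounds (g : M ≃o N) (s : Set M) :
    g '' lowerBounds (upperBounds s) = lowerBounds (upperBounds (g '' s)) := by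
  rw [g.upperBounds_image, g.lowerBounds_image]

theorem isCut_lowerBounds {T : Set M} (hne : (lowerBounds T).Nonempty)
    (hbdd : (upperBounds (lowerBounds T)).Nonempty) : IsCut (lowerBounds T) :=
  ⟨hne, hbdd, gc_upperBounds_lowerBounds.u_l_u_eq_u T⟩

theorem DMC.val_eq_of_isLUB {S : Set M} (hS : S.Nonempty) {p : DMC M}
    (hp : IsLUB (principalCut '' S) p) : p.val = lowerBounds (upperBounds S) := by
  have hSp : S ⊆ p.val := fun a ha => hp.1 (Set.mem_image_of_mem _ ha) (le_refl a)
  have hub : upperBounds p.val ⊆ upperBounds S := upperBounds_mono_set hSp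
  have hcut : IsCut (lowerBounds (upperBounds S)) := by
    obtain ⟨a, ha⟩ := hS
    exact isCut_lowerBounds ⟨a, fun _ hu => hu ha⟩
      ((p.2.2.1.mono hub).mono (subset_upperBounds_lowerBounds _))
  refine Set.Subset.antisymm ?_ ?_
  · refine hp.2 (show (⟨_, hcut⟩ : DMC M) ∈ upperBounds _ from ?_)
    rintro _ ⟨a, ha, rfl⟩ x hx _ hu
    exact le_trans hx (hu ha)
  · rw [← p.2.2.2]
    exact lowerBounds_mono_set hub

theorem DMC.val_eq_of_isGLB {S : Set M} (hS : S.Nonempty) {p : DMC M}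
    (hp : IsGLB (principalCut '' S) p) : p.val = lowerBounds S := by
  have hpS : p.val ⊆ lowerBounds S := fun x hx a ha => hp.1 (Set.mem_image_of_mem _ ha) hx
  have hcut : IsCut (lowerBounds S) :=
    isCut_lowerBounds (p.2.1.mono hpS) (hS.mono (subset_upperBounds_lowerBounds S))
  refine Set.Subset.antisymm hpS (hp.2 (show (⟨_, hcut⟩ : DMC M) ∈ lowerBounds _ from ?_))
  rintro _ ⟨a, ha, rfl⟩ x hx
  exact hx ha

end Cuts

section Graphs

variable {V : Type*} {G : SimpleGraph V}

theorem IsTwoArc.map {V' : Type*} {G' : SimpleGraph V'} (φ : G ≃g G') {a u b : V}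
    (h : IsTwoArc G a u b) : IsTwoArc G' (φ a) (φ u) (φ b) :=
  ⟨φ.map_rel_iff.mpr h.1, φ.map_rel_iff.mpr h.2.1, φ.injective.ne h.2.2⟩

theorem LocallyOneArcTransitive.exists_iso_of_walk (h1 : LocallyOneArcTransitive G) {v w : V}
    (p : G.Walk v w) :
    (Even p.length → ∃ φ : G ≃g G, φ v = w) ∧ (¬ Even p.length → ∃ φ : G ≃g G, G.Adj (φ v) w) := by
  induction p with
  | nil => exact ⟨fun _ => ⟨Iso.refl, rfl⟩, fun h => absurd (by simp) h⟩
  | @cons v x w hvx p ih =>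
    rw [Walk.length_cons, Nat.even_add_one]
    refine ⟨fun hodd => ?_, fun heven => ?_⟩
    · obtain ⟨φ, hφ⟩ := ih.2 hodd
      obtain ⟨ψ, -, hψ⟩ := h1 (φ x) (φ v) w (φ.map_rel_iff.mpr hvx).symm hφ
      exact ⟨φ.trans ψ, hψ⟩
    · obtain ⟨φ, rfl⟩ := ih.1 (not_not.mp heven)
      exact ⟨φ, φ.map_rel_iff.mpr hvx⟩

end Graphs

section TwoLevel

variable {M : Type*} [PartialOrder M]

theorem compGraph_adj {x y : M} : (compGraph M).Adj x y ↔ x < y ∨ y < x := Iff.rfl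

def OrderIso.toCompGraphIso (g : M ≃o M) : compGraph M ≃g compGraph M where
  toEquiv := g.toEquiv
  map_rel_iff' := by simp [compGraph_adj]

namespace IsTwoLevel

variable (h2 : IsTwoLevel M)
include h2

theorem isMin_of_lt {x y : M} (h : x < y) : IsMin x :=
  (h2 x).resolve_right fun hx => h.not_ge (hx h.le)

theorem lt_iff_adj_and_isMin {x y : M} : x < y ↔ (compGraph M).Adj x y ∧ IsMin x :=
  ⟨fun h => ⟨Or.inl h, h2.isMin_of_lt h⟩,
    fun ⟨hxy, hx⟩ => hxy.resolve_right fun h => hx.not_lt h⟩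

theorem isMin_iff_not_isMin_of_adj {x y : M} (h : (compGraph M).Adj x y) :
    IsMin x ↔ ¬ IsMin y := by
  rcases h with h | h
  · exact iff_of_true (h2.isMin_of_lt h) (not_isMin_of_lt h)
  · exact iff_of_false (not_isMin_of_lt h) (not_not.mpr (h2.isMin_of_lt h))

theorem even_length_iff {x y : M} (p : (compGraph M).Walk x y) : Even p.length ↔ (IsMin x ↔ IsMin y) := by
  induction p with
  | nil => simp
  | cons h p ih =>
    rw [Walk.length_cons, Nat.even_add_one, ih, h2.isMin_iff_not_isMin_of_adj h]
    tauto

theorem isMin_iff_isMin_apply_of_reachable (φ : compGraph M ≃g compGraph M) {v x : M}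
    (hvx : (compGraph M).Reachable v x) (hv : IsMin v ↔ IsMin (φ v)) :
    IsMin x ↔ IsMin (φ x) := by
  obtain ⟨p⟩ := hvx
  induction p with
  | nil => exact hv
  | cons h p ih =>
    refine ih ?_
    rw [h2.isMin_iff_not_isMin_of_adj h.symm, hv,
      h2.isMin_iff_not_isMin_of_adj (φ.map_rel_iff.mpr h), not_not]

theorem exists_orderIso_of_isMin_iff (hconn : (compGraph M).Connected)
    (φ : compGraph M ≃g compGraph M) {v : M} (hv : IsMin v ↔ IsMin (φ v)) :
    ∃ g : M ≃o M, ∀ x, g x = φ x := by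
  have hside x : IsMin x ↔ IsMin (φ x) :=
    h2.isMin_iff_isMin_apply_of_reachable φ (hconn.preconnected v x) hv
  have hlt x y : φ x < φ y ↔ x < y := by
    rw [h2.lt_iff_adj_and_isMin, h2.lt_iff_adj_and_isMin, φ.map_rel_iff, ← hside]
  refine ⟨⟨φ.toEquiv, fun {x y} => ?_⟩, fun _ => rfl⟩
  change φ x ≤ φ y ↔ x ≤ y
  rw [le_iff_lt_or_eq, le_iff_lt_or_eq, hlt, φ.injective.eq_iff]

theorem exists_orderIso_apply_eq (hconn : (compGraph M).Connected)
    (h1 : LocallyOneArcTransitive (compGraph M)) {a a' : M} (hside : IsMin a ↔ IsMin a') :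
    ∃ g : M ≃o M, g a = a' := by
  obtain ⟨p⟩ := hconn.preconnected a a'
  obtain ⟨φ, hφ⟩ := (h1.exists_iso_of_walk p).1 ((h2.even_length_iff p).mpr hside)
  obtain ⟨g, hg⟩ := h2.exists_orderIso_of_isMin_iff hconn φ (v := a) (by rwa [hφ])
  exact ⟨g, (hg a).trans hφ⟩

theorem exists_orderIso_map_twoArc (hconn : (compGraph M).Connected)
    (h1 : LocallyOneArcTransitive (compGraph M)) (h2arc : LocallyTwoArcTransitive (compGraph M))
    {a u b a' u' b' : M} (harc : IsTwoArc (compGraph M) a u b)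
    (harc' : IsTwoArc (compGraph M) a' u' b') (hside : IsMin a ↔ IsMin a') :
    ∃ g : M ≃o M, g a = a' ∧ g b = b' := by
  obtain ⟨g, hga⟩ := h2.exists_orderIso_apply_eq hconn h1 hside
  have hmoved : IsTwoArc (compGraph M) a' (g u) (g b) := hga ▸ harc.map g.toCompGraphIso
  obtain ⟨ψ, hψa, -, hψb⟩ := h2arc a' (g u) (g b) u' b' hmoved harc'
  obtain ⟨k, hk⟩ := h2.exists_orderIso_of_isMin_iff hconn ψ (v := a') (by rw [hψa])
  exact ⟨g.trans k, by simp [hga, hk, hψa], by simp [hk, hψb]⟩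

end IsTwoLevel

end TwoLevel

section Ramification

variable {M : Type*} [PartialOrder M]

theorem exists_twoArc_of_mem_downRam {p : DMC M} (hp : p ∈ downRam M) :
    ∃ a u b : M, IsTwoArc (compGraph M) a u b ∧ a < u ∧
      p.val = lowerBounds (upperBounds {a, b}) := by
  obtain ⟨a, b, hab, hba, hlub⟩ := hp
  rw [← Set.image_pair] at hlub
  have hval := DMC.val_eq_of_isLUB (Set.insert_nonempty a {b}) hlub
  obtain ⟨u, hu⟩ := p.2.2.1
  have hbdd : u ∈ upperBounds {a, b} := upperBounds_mono_set (hval ▸ subset_lowerBounds_upperBounds _) hu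
  have hau : a < u := (hbdd (by simp)).lt_of_ne fun h => hba (h ▸ hbdd (by simp))
  have hbu : b < u := (hbdd (by simp)).lt_of_ne fun h => hab (h ▸ hbdd (by simp))
  exact ⟨a, u, b, ⟨Or.inl hau, Or.inr hbu, fun h => hab h.le⟩, hau, hval⟩

theorem exists_twoArc_of_mem_upRam {p : DMC M} (hp : p ∈ upRam M) :
    ∃ a l b : M, IsTwoArc (compGraph M) a l b ∧ l < a ∧ p.val = lowerBounds {a, b} := by
  obtain ⟨a, b, hab, hba, hglb⟩ := hp
  rw [← Set.image_pair] at hglb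
  have hval := DMC.val_eq_of_isGLB (Set.insert_nonempty a {b}) hglb
  obtain ⟨l, hl⟩ := p.2.1
  have hbdd : l ∈ lowerBounds {a, b} := hval ▸ hl
  have hla : l < a := (hbdd (by simp)).lt_of_ne fun h => hab (h ▸ hbdd (by simp))
  have hlb : l < b := (hbdd (by simp)).lt_of_ne fun h => hba (h ▸ hbdd (by simp))
  exact ⟨a, l, b, ⟨Or.inr hla, Or.inl hlb, fun h => hab h.le⟩, hla, hval⟩

end Ramification

/-- Every automorphism of a 2-level poset `M` extends canonically (by taking
images of cuts) to an automorphism of its Dedekind–MacNeille completion; if the comparability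
graph of `M` is connected, locally 1-arc-transitive and locally 2-arc-transitive, then under
this action `Aut(M)` is transitive on the downward ramification points and on the upward
ramification points. -/
theorem aut_extends_and_transitive_on_ram (M : Type*) [PartialOrder M]
    (h2lev : IsTwoLevel M)
    (hconn : (compGraph M).Connected)
    (h1arc : LocallyOneArcTransitive (compGraph M))
    (h2arc : LocallyTwoArcTransitive (compGraph M)) :
    (∀ g : M ≃o M, ∃ G : DMC M ≃o DMC M, ∀ J : DMC M, (G J).val = ⇑g '' J.val) ∧
    (∀ p ∈ downRam M, ∀ q ∈ downRam M, ∃ g : M ≃o M, ⇑g '' p.val = q.val) ∧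
    (∀ p ∈ upRam M, ∀ q ∈ upRam M, ∃ g : M ≃o M, ⇑g '' p.val = q.val) := by
  refine ⟨fun g => ⟨DMC.map g, fun _ => rfl⟩, ?_, ?_⟩
  · intro p hp q hq
    obtain ⟨a, u, b, harc, hau, hp⟩ := exists_twoArc_of_mem_downRam hp
    obtain ⟨a', u', b', harc', hau', hq⟩ := exists_twoArc_of_mem_downRam hq
    obtain ⟨g, ha, hb⟩ := h2lev.exists_orderIso_map_twoArc hconn h1arc h2arc harc harc'
      (iff_of_true (h2lev.isMin_of_lt hau) (h2lev.isMin_of_lt hau'))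
    refine ⟨g, ?_⟩
    rw [hp, hq, g.image_lowerBounds_upperBounds, Set.image_pair, ha, hb]
  · intro p hp q hq
    obtain ⟨a, l, b, harc, hla, hp⟩ := exists_twoArc_of_mem_upRam hp
    obtain ⟨a', l', b', harc', hla', hq⟩ := exists_twoArc_of_mem_upRam hq
    obtain ⟨g, ha, hb⟩ := h2lev.exists_orderIso_map_twoArc hconn h1arc h2arc harc harc'
      (iff_of_false (not_isMin_of_lt hla) (not_isMin_of_lt hla'))
    refine ⟨g, ?_⟩
    rw [hp, hq, ← g.lowerBounds_image, Set.image_pair, ha, hb]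
end

section
/- Let M be a poset such that for all x, y ∈ M with x < y the interval [x,y]^{M^+} is a chain. Then for all a, b ∈ M^D with a < b, the sets [a,b) ∩ (M ∪ ↑Ram(M)) and (a,b] ∩ (M ∪ ↓Ram(M)) are nonempty, where [a,b) = {z ∈ M^D : a ≤ z < b}, (a,b] = {z ∈ M^D : a < z ≤ b}, and M is identified with the set of principal cuts in M^D. -/
set_option autoImplicit false

/-! Every cut of `M` is the meet of the principal cuts above it and the join of those below
it. So `a < b` gives `v ∈ M` with `a ≤ ↓v` but `b ≰ ↓v`; if `↓v < b` we are done, and otherwise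
there is an upper bound `t` of `b` incomparable with `v`. Then `q = ↓v ⊓ ↓t` is an upward
ramification point above `a`, and `q < b`: for every upper bound `t'` of `b`, the cuts `q` and
`↓t ⊓ ↓t'` lie in `[x, t]^{M⁺}` for any `x ∈ a`, hence are comparable, and `↓t ⊓ ↓t' ≤ q` would
force `b ≤ ↓v`. The statement about `(a, b]` is proved by the mirror-image argument with
suprema. -/

section Completion

variable {M : Type*} [PartialOrder M]

theorem principalCut_le_iff {x : M} {c : DMC M} : principalCut x ≤ c ↔ x ∈ c.1 := by
  refine ⟨fun h => h le_rfl, fun hx y hy => ?_⟩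
  rw [← c.2.2.2]
  exact fun u hu => hy.trans (hu hx)

theorem le_principalCut_iff {c : DMC M} {t : M} : c ≤ principalCut t ↔ t ∈ upperBounds c.1 :=
  Iff.rfl

theorem principalCut_le_principalCut {x y : M} : principalCut x ≤ principalCut y ↔ x ≤ y :=
  Set.Iic_subset_Iic

theorem principalCut_lt_principalCut {x y : M} : principalCut x < principalCut y ↔ x < y :=
  lt_iff_lt_of_le_iff_le' principalCut_le_principalCut principalCut_le_principalCut

theorem le_of_forall_principalCut_le {c d : DMC M}
    (h : ∀ m, principalCut m ≤ d → principalCut m ≤ c) : d ≤ c :=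
  fun m hm => principalCut_le_iff.mp (h m (principalCut_le_iff.mpr hm))

theorem le_of_forall_le_principalCut {c d : DMC M}
    (h : ∀ t, d ≤ principalCut t → c ≤ principalCut t) : c ≤ d := by
  intro x hx
  rw [← d.2.2.2]
  exact fun t ht => h t ht hx

theorem exists_principalCut_le_not_le {c d : DMC M} (h : ¬ d ≤ c) :
    ∃ m, principalCut m ≤ d ∧ ¬ principalCut m ≤ c := by
  contrapose! h
  exact le_of_forall_principalCut_le h

theorem exists_le_principalCut_not_le {c d : DMC M} (h : ¬ c ≤ d) :
    ∃ t, d ≤ principalCut t ∧ ¬ c ≤ principalCut t := by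
  contrapose! h
  exact le_of_forall_le_principalCut h

theorem exists_isGLB_image_principalCut {S : Set M} (hS : S.Nonempty) (hb : BddBelow S) :
    ∃ p : DMC M, IsGLB (principalCut '' S) p := by
  refine ⟨⟨lowerBounds S, hb, hS.mono fun s hs x hx => hx hs,
    gc_upperBounds_lowerBounds.u_l_u_eq_u (OrderDual.toDual S)⟩, ?_, ?_⟩
  · rintro _ ⟨s, hs, rfl⟩ x hx
    exact hx hs
  · intro c hc x hx s hs
    exact hc ⟨s, hs, rfl⟩ hx

theorem exists_isLUB_image_principalCut {S : Set M} (hS : S.Nonempty) (hb : BddAbove S) :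
    ∃ p : DMC M, IsLUB (principalCut '' S) p := by
  obtain ⟨u, hu⟩ := hb
  refine ⟨⟨lowerBounds (upperBounds S), hS.mono (subset_lowerBounds_upperBounds S),
    ⟨u, subset_upperBounds_lowerBounds _ hu⟩,
    gc_upperBounds_lowerBounds.u_l_u_eq_u (OrderDual.toDual (upperBounds S))⟩, ?_, ?_⟩
  · rintro _ ⟨s, hs, rfl⟩
    exact principalCut_le_iff.mpr (subset_lowerBounds_upperBounds S hs)
  · intro c hc
    change _ ⊆ c.1
    rw [← c.2.2.2]
    refine lowerBounds_mono_set (upperBounds_mono_set ?_)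
    exact fun s hs => principalCut_le_iff.mp (hc ⟨s, hs, rfl⟩)

theorem exists_isGLB_principalCut_pair {c : DMC M} {v t : M} (hv : c ≤ principalCut v)
    (ht : c ≤ principalCut t) : ∃ p : DMC M, IsGLB {principalCut v, principalCut t} p := by
  obtain ⟨x, hx⟩ := c.2.1
  rw [← Set.image_pair]
  exact exists_isGLB_image_principalCut (Set.insert_nonempty _ _)
    ⟨x, by rintro _ (rfl | rfl); exacts [hv hx, ht hx]⟩

theorem exists_isLUB_principalCut_pair {c : DMC M} {y m : M} (hy : principalCut y ≤ c)
    (hm : principalCut m ≤ c) : ∃ p : DMC M, IsLUB {principalCut y, principalCut m} p := by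
  obtain ⟨u, hu⟩ := c.2.2.1
  rw [← Set.image_pair]
  exact exists_isLUB_image_principalCut (Set.insert_nonempty _ _)
    ⟨u, by
      rintro _ (rfl | rfl)
      exacts [hu (principalCut_le_iff.mp hy), hu (principalCut_le_iff.mp hm)]⟩

theorem mem_principalSet_union_upRam_of_isGLB {v t : M} {p : DMC M}
    (hp : IsGLB {principalCut v, principalCut t} p) : p ∈ principalSet M ∪ upRam M := by
  by_cases hvt : v ≤ t
  · refine Or.inl ⟨v, (hp.unique (IsLeast.isGLB ⟨Set.mem_insert _ _, ?_⟩)).symm⟩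
    rintro _ (rfl | rfl); exacts [le_rfl, principalCut_le_principalCut.mpr hvt]
  by_cases htv : t ≤ v
  · refine Or.inl ⟨t, (hp.unique (IsLeast.isGLB ⟨Set.mem_insert_of_mem _ rfl, ?_⟩)).symm⟩
    rintro _ (rfl | rfl); exacts [principalCut_le_principalCut.mpr htv, le_rfl]
  exact Or.inr ⟨v, t, hvt, htv, hp⟩

theorem mem_principalSet_union_downRam_of_isLUB {y m : M} {p : DMC M}
    (hp : IsLUB {principalCut y, principalCut m} p) : p ∈ principalSet M ∪ downRam M := by
  by_cases hym : y ≤ m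
  · refine Or.inl ⟨m, (hp.unique (IsGreatest.isLUB ⟨Set.mem_insert_of_mem _ rfl, ?_⟩)).symm⟩
    rintro _ (rfl | rfl); exacts [principalCut_le_principalCut.mpr hym, le_rfl]
  by_cases hmy : m ≤ y
  · refine Or.inl ⟨y, (hp.unique (IsGreatest.isLUB ⟨Set.mem_insert _ _, ?_⟩)).symm⟩
    rintro _ (rfl | rfl); exacts [le_rfl, principalCut_le_principalCut.mpr hmy]
  exact Or.inr ⟨y, m, hym, hmy, hp⟩

theorem mem_MPlus_of_isGLB {v t : M} {p : DMC M}
    (hp : IsGLB {principalCut v, principalCut t} p) : p ∈ MPlus M :=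
  Or.inl (mem_principalSet_union_upRam_of_isGLB hp)

theorem mem_MPlus_of_isLUB {y m : M} {p : DMC M}
    (hp : IsLUB {principalCut y, principalCut m} p) : p ∈ MPlus M :=
  (mem_principalSet_union_downRam_of_isLUB hp).elim (Or.inl ∘ Or.inl) Or.inr

theorem nonempty_Ico_inter_principalSet_union_upRam
    (h : ∀ x y : M, x < y →
      IsChain (· ≤ ·) (MPlus M ∩ Set.Icc (principalCut x) (principalCut y)))
    {a b : DMC M} (hab : a < b) : (Set.Ico a b ∩ (principalSet M ∪ upRam M)).Nonempty := by
  obtain ⟨v, hav, hbv⟩ := exists_le_principalCut_not_le hab.not_ge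
  by_cases hvb : principalCut v ≤ b
  · exact ⟨principalCut v, ⟨hav, hvb.lt_of_not_ge hbv⟩, Or.inl ⟨v, rfl⟩⟩
  obtain ⟨t, hbt, hvt⟩ := exists_le_principalCut_not_le hvb
  obtain ⟨x, hx⟩ := a.2.1
  have hxa : principalCut x ≤ a := principalCut_le_iff.mpr hx
  have hxt : x < t := principalCut_lt_principalCut.mp (hxa.trans_lt (hab.trans_le hbt))
  obtain ⟨q, hq⟩ := exists_isGLB_principalCut_pair hav (hab.le.trans hbt)
  have haq : a ≤ q := hq.2 (by rintro _ (rfl | rfl); exacts [hav, hab.le.trans hbt])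
  have hqv : q ≤ principalCut v := hq.1 (Set.mem_insert _ _)
  have hqb : q ≤ b := by
    refine le_of_forall_le_principalCut fun t' hbt' => ?_
    obtain ⟨r, hr⟩ := exists_isGLB_principalCut_pair hbt hbt'
    have hbr : b ≤ r := hr.2 (by rintro _ (rfl | rfl); exacts [hbt, hbt'])
    rcases (h x t hxt).total
        ⟨mem_MPlus_of_isGLB hq, hxa.trans haq, hq.1 (Set.mem_insert_of_mem _ rfl)⟩
        ⟨mem_MPlus_of_isGLB hr, (hxa.trans hab.le).trans hbr,
          hr.1 (Set.mem_insert _ _)⟩ with hqr | hrq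
    · exact hqr.trans (hr.1 (Set.mem_insert_of_mem _ rfl))
    · exact absurd (hbr.trans (hrq.trans hqv)) hbv
  exact ⟨q, ⟨haq, hqb.lt_of_ne fun hqb => hbv (hqb ▸ hqv)⟩,
    mem_principalSet_union_upRam_of_isGLB hq⟩

theorem nonempty_Ioc_inter_principalSet_union_downRam
    (h : ∀ x y : M, x < y →
      IsChain (· ≤ ·) (MPlus M ∩ Set.Icc (principalCut x) (principalCut y)))
    {a b : DMC M} (hab : a < b) : (Set.Ioc a b ∩ (principalSet M ∪ downRam M)).Nonempty := by
  obtain ⟨m, hmb, hma⟩ := exists_principalCut_le_not_le hab.not_ge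
  by_cases ham : a ≤ principalCut m
  · exact ⟨principalCut m, ⟨ham.lt_of_not_ge hma, hmb⟩, Or.inl ⟨m, rfl⟩⟩
  obtain ⟨y, hya, hym⟩ := exists_principalCut_le_not_le ham
  obtain ⟨u, hu⟩ := b.2.2.1
  have hbu : b ≤ principalCut u := le_principalCut_iff.mpr hu
  have hyu : y < u := principalCut_lt_principalCut.mp (hya.trans_lt (hab.trans_le hbu))
  obtain ⟨s, hs⟩ := exists_isLUB_principalCut_pair (hya.trans hab.le) hmb
  have hsb : s ≤ b := hs.2 (by rintro _ (rfl | rfl); exacts [hya.trans hab.le, hmb])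
  have hms : principalCut m ≤ s := hs.1 (Set.mem_insert_of_mem _ rfl)
  have has : a ≤ s := by
    refine le_of_forall_principalCut_le fun y' hya' => ?_
    obtain ⟨r, hr⟩ := exists_isLUB_principalCut_pair hya hya'
    have hra : r ≤ a := hr.2 (by rintro _ (rfl | rfl); exacts [hya, hya'])
    rcases (h y u hyu).total
        ⟨mem_MPlus_of_isLUB hs, hs.1 (Set.mem_insert _ _), hsb.trans hbu⟩
        ⟨mem_MPlus_of_isLUB hr, hr.1 (Set.mem_insert _ _),
          (hra.trans hab.le).trans hbu⟩ with hsr | hrs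
    · exact absurd ((hms.trans hsr).trans hra) hma
    · exact (hr.1 (Set.mem_insert_of_mem _ rfl)).trans hrs
  exact ⟨s, ⟨has.lt_of_ne fun has => hma (has ▸ hms), hsb⟩,
    mem_principalSet_union_downRam_of_isLUB hs⟩

end Completion

/-- density lemma. If all intervals `[x,y]^{M⁺}` (`x < y` in `M`) are
chains, then for any `a < b` in `M^D` both `[a,b) ∩ (M ∪ ↑Ram(M))` and
`(a,b] ∩ (M ∪ ↓Ram(M))` are nonempty. -/
theorem density_lemma (M : Type*) [PartialOrder M]
    (h : ∀ x y : M, x < y →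
      IsChain (· ≤ ·) (MPlus M ∩ Set.Icc (principalCut x) (principalCut y))) :
    ∀ a b : DMC M, a < b →
      (Set.Ico a b ∩ (principalSet M ∪ upRam M)).Nonempty ∧
      (Set.Ioc a b ∩ (principalSet M ∪ downRam M)).Nonempty :=
  fun _ _ hab => ⟨nonempty_Ico_inter_principalSet_union_upRam h hab,
    nonempty_Ioc_inter_principalSet_union_downRam h hab⟩
end
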